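/- Define $S(n,d) = \sum_{i=0}^{n-1} \frac{1}{1 - \binom{i}{d}/\binom{n}{d}}$ as a real number. Fix a natural number $d \geq 1$. Then $$\lim_{n \to \infty} \frac{S(n,d)}{n \log n} \;=\; \frac{1}{d},$$ i.e., the sequence $n \mapsto \frac{S(n,d)}{n \log n}$ tends to $\frac{1}{d}$. -/

import Mathlib

noncomputable def S (n d : ℕ) : ℝ :=
  ∑ i ∈ Finset.range n, 1 / (1 - (i.choose d : ℝ) / (n.choose d : ℝ))

/-!
Each summand `1 / (1 - r)`, `r = C(i,d) / C(n,d)`, lies between `n / (d (n - i))` and that value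
plus `1`. Below: Pascal's rule telescopes to `C(n,d) - C(i,d) ≤ (n - i) C(n-1,d-1)`, and
`n C(n-1,d-1) = d C(n,d)`. Above: `r ≤ (i/n)^d`, and `d (1 - x) ≤ (1 - x^d) (1 + d (1 - x))` because
`1 - x^k ≤ 1 - x^d` for `k < d`. Summing over `i` gives `S(n,d) = (n/d) H_n + O(n)`, and
`H_n = log n + O(1)`.
-/

open Finset Real Filter

namespace Nat

theorem choose_succ_le_choose_succ_add {i n : ℕ} (e : ℕ) (h : i ≤ n) :
    n.choose (e + 1) ≤ i.choose (e + 1) + (n - i) * (n - 1).choose e := by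
  induction n, h using Nat.le_induction with
  | base => simp
  | succ n hin ih =>
    have hmono : (n - 1).choose e ≤ n.choose e := choose_le_choose e (sub_le n 1)
    rw [choose_succ_succ, Nat.add_sub_cancel, Nat.sub_add_comm hin, add_one_mul]
    nlinarith

theorem choose_mul_pow_le_choose_mul_pow {i n : ℕ} (h : i ≤ n) :
    ∀ d, i.choose d * n ^ d ≤ n.choose d * i ^ d
  | 0 => by simp
  | d + 1 => by
    have hstep : (i - d) * n ≤ (n - d) * i := by
      rw [Nat.sub_mul, Nat.sub_mul, mul_comm n i]
      exact Nat.sub_le_sub_left (Nat.mul_le_mul_left d h) _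
    refine Nat.le_of_mul_le_mul_right ?_ d.succ_pos
    calc i.choose (d + 1) * n ^ (d + 1) * (d + 1)
        = i.choose d * n ^ d * ((i - d) * n) := by rw [mul_right_comm, choose_succ_right_eq]; ring
      _ ≤ n.choose d * i ^ d * ((n - d) * i) :=
        Nat.mul_le_mul (choose_mul_pow_le_choose_mul_pow h d) hstep
      _ = n.choose (d + 1) * i ^ (d + 1) * (d + 1) := by
        rw [mul_right_comm _ _ (d + 1), choose_succ_right_eq]; ring

end Nat

theorem mul_one_sub_le_one_sub_pow_mul {x : ℝ} (hx0 : 0 ≤ x) (hx1 : x ≤ 1) (d : ℕ) :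
    d * (1 - x) ≤ (1 - x ^ d) * (1 + d * (1 - x)) := by
  have hgeom := mul_neg_geom_sum x d
  have hsum : (d : ℝ) - ∑ k ∈ range d, x ^ k ≤ d * (1 - x ^ d) := by
    calc (d : ℝ) - ∑ k ∈ range d, x ^ k = ∑ k ∈ range d, (1 - x ^ k) := by simp
      _ ≤ ∑ k ∈ range d, (1 - x ^ d) :=
        sum_le_sum fun k hk => by
          have := pow_le_pow_of_le_one hx0 hx1 (mem_range.mp hk).le
          linarith
      _ = d * (1 - x ^ d) := by simp [mul_sub]
  nlinarith [mul_le_mul_of_nonneg_left hsum (sub_nonneg.mpr hx1)]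

theorem one_sub_choose_div_choose_le {d n i : ℕ} (hd : 1 ≤ d) (hdn : d ≤ n) (hin : i ≤ n) :
    1 - (i.choose d : ℝ) / n.choose d ≤ d * (n - i) / n := by
  obtain ⟨e, rfl⟩ : ∃ e, d = e + 1 := ⟨d - 1, by omega⟩
  obtain ⟨m, rfl⟩ : ∃ m, n = m + 1 := ⟨n - 1, by omega⟩
  have hC : (0 : ℝ) < (m + 1).choose (e + 1) := by exact_mod_cast Nat.choose_pos hdn
  have htelescope : ((m + 1).choose (e + 1) : ℝ) ≤ i.choose (e + 1) + (m + 1 - i) * m.choose e := by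
    have := Nat.choose_succ_le_choose_succ_add e hin
    rw [Nat.add_sub_cancel] at this
    exact_mod_cast this
  have hpascal : ((m + 1 : ℕ) : ℝ) * m.choose e = (m + 1).choose (e + 1) * (e + 1 : ℕ) := by
    exact_mod_cast Nat.add_one_mul_choose_eq m e
  rw [one_sub_div hC.ne', div_le_div_iff₀ hC (by positivity)]
  push_cast at hpascal ⊢
  nlinarith [mul_le_mul_of_nonneg_left htelescope (by positivity : (0 : ℝ) ≤ m + 1)]

theorem choose_div_choose_le_pow {d n i : ℕ} (hdn : d ≤ n) (hin : i ≤ n) :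
    (i.choose d : ℝ) / n.choose d ≤ ((i : ℝ) / n) ^ d := by
  have hC : (0 : ℝ) < n.choose d := by exact_mod_cast Nat.choose_pos hdn
  rcases n.eq_zero_or_pos with rfl | hn
  · obtain rfl : d = 0 := by omega
    simp
  rw [div_pow, div_le_div_iff₀ hC (by positivity), mul_comm _ (n.choose d : ℝ)]
  exact_mod_cast Nat.choose_mul_pow_le_choose_mul_pow hin d

theorem choose_div_choose_lt_one {d n i : ℕ} (hd : 1 ≤ d) (hdn : d ≤ n) (hin : i < n) :
    (i.choose d : ℝ) / n.choose d < 1 := by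
  have hn : (0 : ℝ) < n := by exact_mod_cast Nat.zero_lt_of_lt hin
  refine (choose_div_choose_le_pow hdn hin.le).trans_lt (pow_lt_one₀ (by positivity) ?_ (by omega))
  rw [div_lt_one hn]
  exact_mod_cast hin

theorem div_le_one_div_one_sub_choose_div {d n i : ℕ} (hd : 1 ≤ d) (hdn : d ≤ n) (hin : i < n) :
    (n : ℝ) / (d * (n - i)) ≤ 1 / (1 - (i.choose d : ℝ) / n.choose d) := by
  have hpos := sub_pos.mpr (choose_div_choose_lt_one hd hdn hin)
  rw [← one_div_div]
  exact one_div_le_one_div_of_le hpos (one_sub_choose_div_choose_le hd hdn hin.le)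

theorem one_div_one_sub_choose_div_le {d n i : ℕ} (hd : 1 ≤ d) (hdn : d ≤ n) (hin : i < n) :
    1 / (1 - (i.choose d : ℝ) / n.choose d) ≤ (n : ℝ) / (d * (n - i)) + 1 := by
  set r := (i.choose d : ℝ) / n.choose d
  set x := (i : ℝ) / n
  have hn : (0 : ℝ) < n := by exact_mod_cast Nat.zero_lt_of_lt hin
  have hx1 : x < 1 := by rw [div_lt_one hn]; exact_mod_cast hin
  have hv : 0 < (d : ℝ) * (1 - x) := mul_pos (by exact_mod_cast hd) (by linarith)
  have hr : 1 - x ^ d ≤ 1 - r := by linarith [choose_div_choose_le_pow hdn hin.le]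
  have hpow : 0 < 1 - x ^ d := sub_pos.mpr (pow_lt_one₀ (by positivity) hx1 (by omega))
  have key := mul_one_sub_le_one_sub_pow_mul (x := x) (by positivity) hx1.le d
  calc 1 / (1 - r) ≤ (1 + d * (1 - x)) / (d * (1 - x)) := by
        rw [div_le_div_iff₀ (by linarith) hv]
        nlinarith
    _ = n / (d * (n - i)) + 1 := by
        have hni : (0 : ℝ) < n - i := sub_pos.mpr (by exact_mod_cast hin)
        simp only [x]
        field_simp

theorem sum_range_inv_sub_eq_harmonic (n : ℕ) :
    ∑ i ∈ range n, ((n : ℝ) - i)⁻¹ = harmonic n := by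
  rw [← sum_range_reflect]
  push_cast [harmonic]
  refine sum_congr rfl fun i hi => ?_
  rw [Nat.sub_sub, Nat.cast_sub (by simp at hi; omega)]
  push_cast
  ring_nf

theorem sum_range_div_mul_sub (n d : ℕ) :
    ∑ i ∈ range n, (n : ℝ) / (d * (n - i)) = n / d * harmonic n := by
  rw [← sum_range_inv_sub_eq_harmonic, mul_sum]
  exact sum_congr rfl fun i _ => by simp only [div_eq_mul_inv, mul_inv, mul_assoc]

theorem div_mul_harmonic_le_S {n d : ℕ} (hd : 1 ≤ d) (hdn : d ≤ n) :
    n / d * (harmonic n : ℝ) ≤ S n d := by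
  rw [← sum_range_div_mul_sub]
  exact sum_le_sum fun i hi => div_le_one_div_one_sub_choose_div hd hdn (mem_range.mp hi)

theorem S_le_div_mul_harmonic_add {n d : ℕ} (hd : 1 ≤ d) (hdn : d ≤ n) :
    S n d ≤ n / d * (harmonic n : ℝ) + n := by
  calc S n d ≤ ∑ i ∈ range n, ((n : ℝ) / (d * (n - i)) + 1) :=
        sum_le_sum fun i hi => one_div_one_sub_choose_div_le hd hdn (mem_range.mp hi)
    _ = n / d * (harmonic n : ℝ) + n := by simp [sum_add_distrib, sum_range_div_mul_sub]

theorem inv_le_S_div {n d : ℕ} (hd : 1 ≤ d) (hdn : d ≤ n) (hn : 1 < n) :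
    1 / (d : ℝ) ≤ S n d / (n * log n) := by
  have hlog : 0 < log n := log_pos (by exact_mod_cast hn)
  have hharmonic : log n ≤ harmonic n := by
    refine (log_le_log (by positivity) ?_).trans (log_add_one_le_harmonic n)
    exact_mod_cast n.le_succ
  rw [le_div_iff₀ (by positivity)]
  calc 1 / (d : ℝ) * (n * log n) = n / d * log n := by ring
    _ ≤ n / d * harmonic n := by gcongr
    _ ≤ S n d := div_mul_harmonic_le_S hd hdn

theorem S_div_le {n d : ℕ} (hd : 1 ≤ d) (hdn : d ≤ n) (hn : 1 < n) :
    S n d / (n * log n) ≤ 1 / d + (1 / d + 1) * (log n)⁻¹ := by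
  have hlog : 0 < log n := log_pos (by exact_mod_cast hn)
  have hd0 : (0 : ℝ) < d := by exact_mod_cast hd
  rw [div_le_iff₀ (by positivity)]
  calc S n d ≤ n / d * (harmonic n : ℝ) + n := S_le_div_mul_harmonic_add hd hdn
    _ ≤ n / d * (1 + log n) + n := by gcongr; exact harmonic_le_one_add_log n
    _ = (1 / d + (1 / d + 1) * (log n)⁻¹) * (n * log n) := by field_simp; ring

theorem S_limit (d : ℕ) (hd : 1 ≤ d) :
    Filter.Tendsto (fun n : ℕ => S n d / ((n : ℝ) * Real.log n))
      Filter.atTop (nhds (1 / (d : ℝ))) := by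
  have hlog : Tendsto (fun n : ℕ => (log n)⁻¹) atTop (nhds 0) :=
    (tendsto_log_atTop.comp tendsto_natCast_atTop_atTop).inv_tendsto_atTop
  have hupper : Tendsto (fun n : ℕ => 1 / (d : ℝ) + (1 / d + 1) * (log n)⁻¹) atTop (nhds (1 / d)) := by
    simpa using tendsto_const_nhds.add (hlog.const_mul (1 / (d : ℝ) + 1))
  refine tendsto_of_tendsto_of_tendsto_of_le_of_le' tendsto_const_nhds hupper ?_ ?_ <;>
    filter_upwards [eventually_ge_atTop d, eventually_gt_atTop 1] with n hdn hn
  · exact inv_le_S_div hd hdn hn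
  · exact S_div_le hd hdn hn
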